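/- Let F_1, …, F_r be submodular functions on V with F_j(∅) = 0, and let f_j be the Lovász extension of F_j. Then min_{x ∈ ℝ^V} [ Σ_{j=1}^r f_j(x) + (1/2)‖x‖² ] = − (1/2) min { ‖ Σ_{j=1}^r y_j ‖² : y_j ∈ B(F_j) for all j }, both minima are attained, and if (y_1,…,y_r) attains the right-hand minimum then x = − Σ_{j=1}^r y_j is the unique minimizer of the left-hand problem. -/

import Mathlib

open Finset
open Finset

def Submodular {n : ℕ} (F : Finset (Fin n) → ℝ) : Prop :=
  ∀ S T : Finset (Fin n), F (S ∪ T) + F (S ∩ T) ≤ F S + F T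

def basePolytope {n : ℕ} (F : Finset (Fin n) → ℝ) : Set (Fin n → ℝ) :=
  {y | (∀ S : Finset (Fin n), ∑ i ∈ S, y i ≤ F S) ∧ ∑ i, y i = F Finset.univ}

def SortsDesc {n : ℕ} (x : Fin n → ℝ) (σ : Equiv.Perm (Fin n)) : Prop :=
  ∀ j k : Fin n, j ≤ k → x (σ k) ≤ x (σ j)

def lovaszVal {n : ℕ} (F : Finset (Fin n) → ℝ) (x : Fin n → ℝ) (σ : Equiv.Perm (Fin n)) : ℝ :=
  ∑ k : Fin n, x (σ k) *
    (F ((Finset.univ.filter (fun j => j ≤ k)).image ⇑σ)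
      - F ((Finset.univ.filter (fun j => j < k)).image ⇑σ))

def IsLovasz {n : ℕ} (F : Finset (Fin n) → ℝ) (f : (Fin n → ℝ) → ℝ) : Prop :=
  ∀ (x : Fin n → ℝ) (σ : Equiv.Perm (Fin n)), SortsDesc x σ → f x = lovaszVal F x σ

/-!
The Lovász extension `f_j` of `F_j` is the support function of `B(F_j)`: if `σ` sorts `x`
decreasingly, the greedy vector of `σ` lies in `B(F_j)` (submodularity) and pairs with `x` to
`f_j x`, while Abel summation bounds `⟪x, y⟫ ≤ f_j x` for every `y ∈ B(F_j)`. Hence, with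
`s = ∑ j, y_j`, `∑ f_j x + ½‖x‖² ≥ ⟪x, s⟫ + ½‖x‖² = ½‖x + s‖² - ½‖s‖²`, with equality only if
`x = -s`. Each `B(F_j)` is compact and convex, so `‖s‖²` attains its minimum, and at a minimizer
the first-order condition `⟪s, z - y_j⟫ ≥ 0` for `z ∈ B(F_j)` says that every `y_j` maximizes
`⟪-s, ·⟫` on `B(F_j)`, so that equality holds at `x = -s`.
-/

open Filter Topology

theorem Submodular.insert_sub_le_insert_sub {n : ℕ} {F : Finset (Fin n) → ℝ} (hF : Submodular F)
    {A B : Finset (Fin n)} (hAB : A ⊆ B) {i : Fin n} (hi : i ∉ B) :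
    F (insert i B) - F B ≤ F (insert i A) - F A := by
  have h := hF (insert i A) B
  rw [insert_union, union_eq_right.2 hAB, insert_inter_of_notMem hi, inter_eq_left.2 hAB] at h
  linarith

theorem sum_mul_sub_nonneg_of_antitone {m : ℕ} {a : Fin m → ℝ} (ha : Antitone a) {d : ℕ → ℝ}
    (hd : ∀ k, 0 ≤ d k) (h0 : d 0 = 0) (hm : d m = 0) :
    0 ≤ ∑ k : Fin m, a k * (d (k + 1) - d k) := by
  -- Abel summation, by induction: the partial sum up to `k` is at least `a k * d (k + 1)`.
  suffices key : ∀ {m : ℕ} (a : Fin (m + 1) → ℝ), Antitone a →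
      a (Fin.last m) * d (m + 1) ≤ ∑ k : Fin (m + 1), a k * (d (k + 1) - d k) by
    cases m with
    | zero => simp
    | succ m => simpa [hm] using key a ha
  intro m
  induction m with
  | zero => intro a _; simp [h0]
  | succ m ih =>
    intro a ha
    rw [Fin.sum_univ_castSucc]
    have hprev := ih (a ∘ Fin.castSucc) (ha.comp_monotone Fin.strictMono_castSucc.monotone)
    have hstep : a (Fin.last (m + 1)) ≤ a (Fin.castSucc (Fin.last m)) := ha (Fin.le_last _)
    simp only [Function.comp_apply, Fin.val_castSucc, Fin.val_last] at hprev ⊢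
    nlinarith [hd (m + 1)]

section Greedy

variable {n : ℕ}

def initSeg (σ : Equiv.Perm (Fin n)) (m : ℕ) : Finset (Fin n) :=
  (univ.filter fun j : Fin n => (j : ℕ) < m).image σ

theorem initSeg_zero (σ : Equiv.Perm (Fin n)) : initSeg σ 0 = ∅ := by
  simp [initSeg]

theorem initSeg_of_le (σ : Equiv.Perm (Fin n)) {m : ℕ} (hm : n ≤ m) : initSeg σ m = univ := by
  rw [initSeg, filter_true_of_mem fun j _ => j.isLt.trans_le hm, image_univ_equiv]

theorem apply_notMem_initSeg (σ : Equiv.Perm (Fin n)) (k : Fin n) : σ k ∉ initSeg σ k := by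
  simp [initSeg]

theorem initSeg_succ (σ : Equiv.Perm (Fin n)) (k : Fin n) :
    initSeg σ (k + 1) = insert (σ k) (initSeg σ k) := by
  rw [initSeg, initSeg, ← image_insert]
  congr 1
  ext j
  simp only [mem_insert, mem_filter, mem_univ, true_and, Fin.ext_iff]
  omega

theorem lovaszVal_eq_sum_initSeg (F : Finset (Fin n) → ℝ) (x : Fin n → ℝ)
    (σ : Equiv.Perm (Fin n)) :
    lovaszVal F x σ = ∑ k : Fin n, x (σ k) * (F (initSeg σ (k + 1)) - F (initSeg σ k)) := by
  simp only [lovaszVal, initSeg, Nat.lt_succ_iff, Fin.le_def, Fin.lt_def]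

theorem lovaszVal_sub (F G : Finset (Fin n) → ℝ) (x : Fin n → ℝ) (σ : Equiv.Perm (Fin n)) :
    lovaszVal (F - G) x σ = lovaszVal F x σ - lovaszVal G x σ := by
  simp only [lovaszVal, Pi.sub_apply, ← sum_sub_distrib]
  exact sum_congr rfl fun _ _ => by ring

theorem lovaszVal_sum (y x : Fin n → ℝ) (σ : Equiv.Perm (Fin n)) :
    lovaszVal (fun S => ∑ i ∈ S, y i) x σ = x ⬝ᵥ y := by
  rw [lovaszVal_eq_sum_initSeg, dotProduct, ← Equiv.sum_comp σ fun i => x i * y i]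
  refine sum_congr rfl fun k _ => ?_
  rw [initSeg_succ, sum_insert (apply_notMem_initSeg σ k), add_sub_cancel_right]

theorem lovaszVal_nonneg {G : Finset (Fin n) → ℝ} (hG : ∀ S, 0 ≤ G S) (h0 : G ∅ = 0)
    (huniv : G univ = 0) {x : Fin n → ℝ} {σ : Equiv.Perm (Fin n)} (hσ : SortsDesc x σ) :
    0 ≤ lovaszVal G x σ := by
  rw [lovaszVal_eq_sum_initSeg]
  exact sum_mul_sub_nonneg_of_antitone (a := x ∘ σ) hσ (fun m => hG _)
    (by rw [initSeg_zero, h0]) (by rw [initSeg_of_le σ le_rfl, huniv])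

theorem dotProduct_le_lovaszVal {F : Finset (Fin n) → ℝ} (h0 : F ∅ = 0) {y : Fin n → ℝ}
    (hy : y ∈ basePolytope F) {x : Fin n → ℝ} {σ : Equiv.Perm (Fin n)} (hσ : SortsDesc x σ) :
    x ⬝ᵥ y ≤ lovaszVal F x σ := by
  have h := lovaszVal_nonneg (G := F - fun S => ∑ i ∈ S, y i) (fun S => sub_nonneg.2 (hy.1 S))
    (by simp [h0]) (by simp [hy.2]) hσ
  rwa [lovaszVal_sub, lovaszVal_sum, sub_nonneg] at h

/-- Edmonds' greedy vertex of the base polytope. -/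
def greedy (F : Finset (Fin n) → ℝ) (σ : Equiv.Perm (Fin n)) : Fin n → ℝ :=
  fun i => F (initSeg σ (σ.symm i + 1)) - F (initSeg σ (σ.symm i))

theorem greedy_apply_perm (F : Finset (Fin n) → ℝ) (σ : Equiv.Perm (Fin n)) (k : Fin n) :
    greedy F σ (σ k) = F (initSeg σ (k + 1)) - F (initSeg σ k) := by
  simp [greedy]

theorem dotProduct_greedy (F : Finset (Fin n) → ℝ) (x : Fin n → ℝ) (σ : Equiv.Perm (Fin n)) :
    x ⬝ᵥ greedy F σ = lovaszVal F x σ := by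
  rw [lovaszVal_eq_sum_initSeg, dotProduct, ← Equiv.sum_comp σ fun i => x i * greedy F σ i]
  simp only [greedy_apply_perm]

theorem sum_greedy_initSeg {F : Finset (Fin n) → ℝ} (h0 : F ∅ = 0) (σ : Equiv.Perm (Fin n))
    {m : ℕ} (hm : m ≤ n) : ∑ i ∈ initSeg σ m, greedy F σ i = F (initSeg σ m) := by
  induction m with
  | zero => simp [initSeg_zero, h0]
  | succ m ih =>
    obtain ⟨k, rfl⟩ : ∃ k : Fin n, (k : ℕ) = m := ⟨⟨m, hm⟩, rfl⟩
    rw [initSeg_succ, sum_insert (apply_notMem_initSeg σ k), ih (by omega), greedy_apply_perm,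
      initSeg_succ]
    ring

theorem sum_greedy_inter_initSeg_le {F : Finset (Fin n) → ℝ} (hF : Submodular F)
    (h0 : F ∅ = 0) (σ : Equiv.Perm (Fin n)) (S : Finset (Fin n)) {m : ℕ} (hm : m ≤ n) :
    ∑ i ∈ S ∩ initSeg σ m, greedy F σ i ≤ F (S ∩ initSeg σ m) := by
  induction m with
  | zero => simp [initSeg_zero, h0]
  | succ m ih =>
    obtain ⟨k, rfl⟩ : ∃ k : Fin n, (k : ℕ) = m := ⟨⟨m, hm⟩, rfl⟩
    have ih := ih (by omega)
    rw [initSeg_succ]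
    by_cases hk : σ k ∈ S
    · have hmarg := hF.insert_sub_le_insert_sub (A := S ∩ initSeg σ k) inter_subset_right
        (apply_notMem_initSeg σ k)
      rw [inter_insert_of_mem hk, sum_insert fun h => apply_notMem_initSeg σ k (mem_inter.1 h).2,
        greedy_apply_perm, initSeg_succ]
      linarith
    · rwa [inter_insert_of_notMem hk]

theorem greedy_mem_basePolytope {F : Finset (Fin n) → ℝ} (hF : Submodular F) (h0 : F ∅ = 0)
    (σ : Equiv.Perm (Fin n)) : greedy F σ ∈ basePolytope F := by
  refine ⟨fun S => ?_, ?_⟩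
  · simpa [initSeg_of_le σ le_rfl] using sum_greedy_inter_initSeg_le hF h0 σ S le_rfl
  · simpa [initSeg_of_le σ le_rfl] using sum_greedy_initSeg h0 σ le_rfl (F := F)

theorem exists_sortsDesc (x : Fin n → ℝ) : ∃ σ : Equiv.Perm (Fin n), SortsDesc x σ :=
  ⟨Tuple.sort (-x), fun _ _ hjk => neg_le_neg_iff.1 (Tuple.monotone_sort (-x) hjk)⟩

theorem IsLovasz.isGreatest {F : Finset (Fin n) → ℝ} {f : (Fin n → ℝ) → ℝ} (hf : IsLovasz F f)
    (hF : Submodular F) (h0 : F ∅ = 0) (x : Fin n → ℝ) :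
    IsGreatest ((x ⬝ᵥ ·) '' basePolytope F) (f x) := by
  obtain ⟨σ, hσ⟩ := exists_sortsDesc x
  rw [hf x σ hσ]
  refine ⟨⟨greedy F σ, greedy_mem_basePolytope hF h0 σ, dotProduct_greedy F x σ⟩, ?_⟩
  rintro _ ⟨y, hy, rfl⟩
  exact dotProduct_le_lovaszVal h0 hy hσ

end Greedy

theorem convex_basePolytope {n : ℕ} (F : Finset (Fin n) → ℝ) : Convex ℝ (basePolytope F) := by
  intro y hy z hz a b ha hb hab
  have hsum : ∀ S : Finset (Fin n), ∑ i ∈ S, (a • y + b • z) i =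
      a * ∑ i ∈ S, y i + b * ∑ i ∈ S, z i := fun S => by
    simp only [Pi.add_apply, Pi.smul_apply, smul_eq_mul, sum_add_distrib, mul_sum]
  refine ⟨fun S => ?_, ?_⟩
  · calc ∑ i ∈ S, (a • y + b • z) i ≤ a * F S + b * F S := by
          rw [hsum]
          exact add_le_add (mul_le_mul_of_nonneg_left (hy.1 S) ha)
            (mul_le_mul_of_nonneg_left (hz.1 S) hb)
      _ = F S := by rw [← add_mul, hab, one_mul]
  · rw [hsum, hy.2, hz.2, ← add_mul, hab, one_mul]

theorem isCompact_basePolytope {n : ℕ} (F : Finset (Fin n) → ℝ) :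
    IsCompact (basePolytope F) := by
  have hclosed : IsClosed (basePolytope F) := by
    simp only [basePolytope, Set.ofPred_and, Set.ofPred_forall]
    exact (isClosed_iInter fun S => isClosed_le (by fun_prop) continuous_const).inter
      (isClosed_eq (by fun_prop) continuous_const)
  refine (isCompact_Icc (a := fun i => F univ - F (univ.erase i)) (b := fun i => F {i}))
    |>.of_isClosed_subset hclosed fun y hy => ⟨fun i => ?_, fun i => by simpa using hy.1 {i}⟩
  have := add_sum_erase univ y (mem_univ i)
  linarith [hy.1 (univ.erase i), hy.2]

theorem nonneg_of_forall_Ioc_nonneg_add_mul {a b : ℝ}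
    (h : ∀ t ∈ Set.Ioc (0 : ℝ) 1, 0 ≤ a + t * b) : 0 ≤ a := by
  have hlim : Tendsto (fun t => a + t * b) (𝓝[>] 0) (𝓝 a) := by
    have : Continuous fun t : ℝ => a + t * b := by fun_prop
    simpa using (this.tendsto 0).mono_left nhdsWithin_le_nhds
  exact ge_of_tendsto hlim (eventually_of_mem (Ioc_mem_nhdsGT one_pos) h)

theorem dotProduct_self_nonneg {ι : Type*} [Fintype ι] (v : ι → ℝ) : 0 ≤ v ⬝ᵥ v :=
  Fintype.sum_nonneg fun i => mul_self_nonneg (v i)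

theorem sum_sq_eq_dotProduct {ι : Type*} [Fintype ι] (v : ι → ℝ) : ∑ i, v i ^ 2 = v ⬝ᵥ v := by
  simp only [dotProduct, sq]

section SupportDuality

variable {ι κ : Type*} [Fintype ι] [Fintype κ] {K : κ → Set (ι → ℝ)} {f : κ → (ι → ℝ) → ℝ}

theorem dotProduct_sum_le_sum_of_isGreatest (hf : ∀ j x, IsGreatest ((x ⬝ᵥ ·) '' K j) (f j x))
    {y : κ → ι → ℝ} (hy : y ∈ Set.univ.pi K) (x : ι → ℝ) : x ⬝ᵥ ∑ j, y j ≤ ∑ j, f j x := by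
  rw [dotProduct_sum]
  exact sum_le_sum fun j _ => (hf j x).2 ⟨y j, hy j trivial, rfl⟩

theorem add_dotProduct_self_le (hf : ∀ j x, IsGreatest ((x ⬝ᵥ ·) '' K j) (f j x))
    {y : κ → ι → ℝ} (hy : y ∈ Set.univ.pi K) (x : ι → ℝ) :
    (x + ∑ j, y j) ⬝ᵥ (x + ∑ j, y j) ≤
      2 * ∑ j, f j x + x ⬝ᵥ x + (∑ j, y j) ⬝ᵥ (∑ j, y j) := by
  have := dotProduct_sum_le_sum_of_isGreatest hf hy x
  simp only [add_dotProduct, dotProduct_add, dotProduct_comm (∑ j, y j) x]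
  linarith

theorem neg_half_le_sum_add_half_dotProduct_self
    (hf : ∀ j x, IsGreatest ((x ⬝ᵥ ·) '' K j) (f j x)) {y : κ → ι → ℝ} (hy : y ∈ Set.univ.pi K)
    (x : ι → ℝ) : -(1/2) * ((∑ j, y j) ⬝ᵥ (∑ j, y j)) ≤ ∑ j, f j x + 1/2 * (x ⬝ᵥ x) := by
  nlinarith [add_dotProduct_self_le hf hy x, dotProduct_self_nonneg (x + ∑ j, y j)]

theorem eq_neg_sum_of_sum_add_half_dotProduct_self_eq
    (hf : ∀ j x, IsGreatest ((x ⬝ᵥ ·) '' K j) (f j x)) {y : κ → ι → ℝ} (hy : y ∈ Set.univ.pi K)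
    {x : ι → ℝ} (hx : ∑ j, f j x + 1/2 * (x ⬝ᵥ x) = -(1/2) * ((∑ j, y j) ⬝ᵥ (∑ j, y j))) :
    x = -∑ j, y j := by
  have hle := add_dotProduct_self_le hf hy x
  rw [← add_eq_zero_iff_eq_neg, ← dotProduct_self_eq_zero]
  exact le_antisymm (by linarith) (dotProduct_self_nonneg _)

theorem dotProduct_sum_le_of_isMinOn (hK : ∀ j, Convex ℝ (K j)) {y : κ → ι → ℝ}
    (hy : y ∈ Set.univ.pi K)
    (hmin : IsMinOn (fun y : κ → ι → ℝ => (∑ j, y j) ⬝ᵥ (∑ j, y j)) (Set.univ.pi K) y)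
    (j : κ) {z : ι → ℝ} (hz : z ∈ K j) : (∑ j, y j) ⬝ᵥ y j ≤ (∑ j, y j) ⬝ᵥ z := by
  classical
  -- Moving `y j` towards `z` inside `K j` cannot decrease the dual objective.
  suffices h : ∀ t ∈ Set.Ioc (0 : ℝ) 1,
      0 ≤ 2 * ((∑ j, y j) ⬝ᵥ (z - y j)) + t * ((z - y j) ⬝ᵥ (z - y j)) by
    have := nonneg_of_forall_Ioc_nonneg_add_mul h
    rw [dotProduct_sub] at this
    linarith
  intro t ht
  have hmem : y + Pi.single j (t • (z - y j)) ∈ Set.univ.pi K := fun j' _ => by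
    rcases eq_or_ne j' j with rfl | hne
    · simpa using (hK j').add_smul_sub_mem (hy j' trivial) hz ⟨ht.1.le, ht.2⟩
    · simpa [hne] using hy j' trivial
  have hle := hmin hmem
  simp only [Set.mem_ofPred_eq, Pi.add_apply, sum_add_distrib, sum_pi_single', mem_univ,
    if_true, add_dotProduct, dotProduct_add, dotProduct_smul, smul_dotProduct, smul_eq_mul,
    dotProduct_comm (z - y j)] at hle
  nlinarith [ht.1]

theorem sum_apply_neg_eq_of_isMinOn (hf : ∀ j x, IsGreatest ((x ⬝ᵥ ·) '' K j) (f j x))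
    (hK : ∀ j, Convex ℝ (K j)) {y : κ → ι → ℝ} (hy : y ∈ Set.univ.pi K)
    (hmin : IsMinOn (fun y : κ → ι → ℝ => (∑ j, y j) ⬝ᵥ (∑ j, y j)) (Set.univ.pi K) y) :
    ∑ j, f j (-∑ j, y j) = -((∑ j, y j) ⬝ᵥ (∑ j, y j)) := by
  -- By first-order optimality, `y j` maximizes `(-∑ j, y j) ⬝ᵥ ·` over `K j`.
  have hj : ∀ j, f j (-∑ j, y j) = -(∑ j, y j) ⬝ᵥ y j := fun j => by
    obtain ⟨⟨z, hz, hzf⟩, hub⟩ := hf j (-∑ j, y j)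
    refine le_antisymm ?_ (hub ⟨y j, hy j trivial, rfl⟩)
    rw [← hzf]
    simp only [neg_dotProduct, neg_le_neg_iff]
    exact dotProduct_sum_le_of_isMinOn hK hy hmin j hz
  rw [sum_congr rfl fun j _ => hj j, ← dotProduct_sum, neg_dotProduct]

theorem sum_apply_neg_add_half_dotProduct_self_eq_of_isMinOn
    (hf : ∀ j x, IsGreatest ((x ⬝ᵥ ·) '' K j) (f j x)) (hK : ∀ j, Convex ℝ (K j))
    {y : κ → ι → ℝ} (hy : y ∈ Set.univ.pi K)
    (hmin : IsMinOn (fun y : κ → ι → ℝ => (∑ j, y j) ⬝ᵥ (∑ j, y j)) (Set.univ.pi K) y) :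
    ∑ j, f j (-∑ j, y j) + 1/2 * ((-∑ j, y j) ⬝ᵥ (-∑ j, y j)) =
      -(1/2) * ((∑ j, y j) ⬝ᵥ (∑ j, y j)) := by
  rw [sum_apply_neg_eq_of_isMinOn hf hK hy hmin, neg_dotProduct_neg]
  ring

end SupportDuality

theorem exists_isLeast_support_add_half_sq {ι κ : Type*} [Fintype ι] [Fintype κ]
    {K : κ → Set (ι → ℝ)} (hKc : ∀ j, IsCompact (K j)) (hK : ∀ j, Convex ℝ (K j))
    {f : κ → (ι → ℝ) → ℝ} (hf : ∀ j x, IsGreatest ((x ⬝ᵥ ·) '' K j) (f j x)) :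
    ∃ m s : ℝ,
      IsLeast (Set.range (fun x : ι → ℝ =>
        (∑ j, f j x) + (1/2) * ∑ i, (x i)^2)) m ∧
      IsLeast {v : ℝ | ∃ y : κ → ι → ℝ,
        (∀ j, y j ∈ K j) ∧ v = ∑ i, (∑ j, y j i)^2} s ∧
      m = -(1/2) * s ∧
      ∀ y : κ → ι → ℝ, (∀ j, y j ∈ K j) →
        (∑ i, (∑ j, y j i)^2 = s) →
        ((∑ j, f j (fun i => -∑ j', y j' i)) + (1/2) * ∑ i, ((fun i => -∑ j', y j' i) i)^2 = m ∧
         ∀ x : ι → ℝ, (∑ j, f j x) + (1/2) * ∑ i, (x i)^2 = m →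
           x = fun i => -∑ j', y j' i) := by
  have hfun : ∀ y : κ → ι → ℝ, (fun i => ∑ j, y j i) = ∑ j, y j := fun y => (sum_fn _ _).symm
  have hneg : ∀ y : κ → ι → ℝ, (fun i => -∑ j, y j i) = -∑ j, y j := fun y => by
    rw [← hfun]; rfl
  simp only [sum_sq_eq_dotProduct, hfun, hneg, ← Set.mem_univ_pi]
  obtain ⟨y₀, hy₀, hmin₀⟩ := (isCompact_univ_pi hKc).exists_isMinOn
    (Set.univ_pi_nonempty_iff.2 fun j => (hf j 0).nonempty.of_image)
    (f := fun y : κ → ι → ℝ => (∑ j, y j) ⬝ᵥ (∑ j, y j)) (by fun_prop)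
  refine ⟨_, _, ⟨⟨-∑ j, y₀ j,
    sum_apply_neg_add_half_dotProduct_self_eq_of_isMinOn hf hK hy₀ hmin₀⟩, ?_⟩,
    ⟨⟨y₀, hy₀, rfl⟩, ?_⟩, rfl, fun y hy hys => ?_⟩
  · rintro _ ⟨x, rfl⟩
    exact neg_half_le_sum_add_half_dotProduct_self hf hy₀ x
  · rintro _ ⟨y, hy, rfl⟩
    exact hmin₀ hy
  · have hmin : IsMinOn (fun y : κ → ι → ℝ => (∑ j, y j) ⬝ᵥ (∑ j, y j)) (Set.univ.pi K) y :=
      fun y' hy' => hys.trans_le (hmin₀ hy')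
    rw [← hys]
    exact ⟨sum_apply_neg_add_half_dotProduct_self_eq_of_isMinOn hf hK hy hmin,
      fun x hx => eq_neg_sum_of_sum_add_half_dotProduct_self_eq hf hy hx⟩

/-- simplified dual of the proximal problem:
`min_x [Σ_j f_j(x) + ½‖x‖²] = −(1/2) min {‖Σ_j y_j‖² : y_j ∈ B(F_j)}`,
both minima are attained, and any dual optimum `(y_1,…,y_r)` yields the unique
primal minimizer `x = −Σ_j y_j`. -/
theorem statement6 {n r : ℕ} (F : Fin r → Finset (Fin n) → ℝ)
    (hF0 : ∀ j, F j ∅ = 0) (hF : ∀ j, Submodular (F j))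
    (f : Fin r → (Fin n → ℝ) → ℝ) (hf : ∀ j, IsLovasz (F j) (f j)) :
    ∃ m s : ℝ,
      IsLeast (Set.range (fun x : Fin n → ℝ =>
        (∑ j, f j x) + (1/2) * ∑ i, (x i)^2)) m ∧
      IsLeast {v : ℝ | ∃ y : Fin r → Fin n → ℝ,
        (∀ j, y j ∈ basePolytope (F j)) ∧ v = ∑ i, (∑ j, y j i)^2} s ∧
      m = -(1/2) * s ∧
      ∀ y : Fin r → Fin n → ℝ, (∀ j, y j ∈ basePolytope (F j)) →
        (∑ i, (∑ j, y j i)^2 = s) →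
        ((∑ j, f j (fun i => -∑ j', y j' i)) + (1/2) * ∑ i, ((fun i => -∑ j', y j' i) i)^2 = m ∧
         ∀ x : Fin n → ℝ, (∑ j, f j x) + (1/2) * ∑ i, (x i)^2 = m →
           x = fun i => -∑ j', y j' i) :=
  exists_isLeast_support_add_half_sq (K := fun j => basePolytope (F j))
    (fun j => isCompact_basePolytope (F j)) (fun j => convex_basePolytope (F j))
    fun j => (hf j).isGreatest (hF j) (hF0 j)
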